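/- Let S be a finite set of integers all at least 2, and consider the partizan subtraction game with S_L = {1} and S_R = {s − 1 : s ∈ S}. Then for every n ≥ 1, Right moving second has a winning strategy on a heap of n tokens (i.e., ¬LeftFirstWins(n)) if and only if n can be written as a sum of elements of S with repetition allowed (i.e., n = Σ_{s∈S} n_s · s for some nonnegative integers n_s). -/
import Mathlib

mutual
def LeftFirstWins (SL SR : Finset ℕ) : ℕ → Prop
  | n => ∃ s ∈ SL, ∃ (_ : 0 < s) (_ : s ≤ n), ¬ RightFirstWins SL SR (n - s)
  termination_by n => n
  decreasing_by omega
def RightFirstWins (SL SR : Finset ℕ) : ℕ → Prop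
  | n => ∃ s ∈ SR, ∃ (_ : 0 < s) (_ : s ≤ n), ¬ LeftFirstWins SL SR (n - s)
  termination_by n => n
  decreasing_by omega
end

inductive Outcome | P | L | R | N
deriving DecidableEq

open Classical in
noncomputable def outcome (SL SR : Finset ℕ) (n : ℕ) : Outcome :=
  if LeftFirstWins SL SR n then
    if RightFirstWins SL SR n then .N else .L
  else
    if RightFirstWins SL SR n then .R else .P

def RepSum (S : Finset ℕ) (n : ℕ) : Prop := ∃ c : ℕ → ℕ, n = ∑ s ∈ S, c s * s

lemma repsum_zero (S : Finset ℕ) : RepSum S 0 := ⟨fun _ => 0, by simp⟩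

lemma repsum_add (S : Finset ℕ) {t m : ℕ} (ht : t ∈ S) (h : RepSum S m) : RepSum S (m + t) := by
  obtain ⟨c, rfl⟩ := h
  refine ⟨fun s => if s = t then c t + 1 else c s, ?_⟩
  have h1 : ∑ s ∈ S, (if s = t then c t + 1 else c s) * s
      = (c t + 1) * t + ∑ s ∈ S.erase t, c s * s := by
    rw [← Finset.add_sum_erase _ (fun s => (if s = t then c t + 1 else c s) * s) ht]
    simp only [if_pos rfl]
    congr 1
    exact Finset.sum_congr rfl fun s hs => by rw [if_neg (Finset.ne_of_mem_erase hs)]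
  have h2 : ∑ s ∈ S, c s * s = c t * t + ∑ s ∈ S.erase t, c s * s :=
    (Finset.add_sum_erase _ _ ht).symm
  rw [h1, h2, add_mul, one_mul]
  ring

lemma repsum_sub (S : Finset ℕ) {n : ℕ} (hn : 1 ≤ n) (h : RepSum S n) :
    ∃ t ∈ S, t ≤ n ∧ RepSum S (n - t) := by
  obtain ⟨c, rfl⟩ := h
  have : ∃ t ∈ S, c t * t ≠ 0 := by
    by_contra hc
    push_neg at hc
    rw [Finset.sum_eq_zero hc] at hn
    omega
  obtain ⟨t, ht, hct⟩ := this
  have hc1 : 1 ≤ c t := by by_contra h; push_neg at h; interval_cases (c t) <;> simp_all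
  have h1 : ∑ s ∈ S, (if s = t then c t - 1 else c s) * s
      = (c t - 1) * t + ∑ s ∈ S.erase t, c s * s := by
    rw [← Finset.add_sum_erase _ (fun s => (if s = t then c t - 1 else c s) * s) ht]
    simp only [if_pos rfl]
    congr 1
    exact Finset.sum_congr rfl fun s hs => by rw [if_neg (Finset.ne_of_mem_erase hs)]
  have h2 : ∑ s ∈ S, c s * s = c t * t + ∑ s ∈ S.erase t, c s * s :=
    (Finset.add_sum_erase _ _ ht).symm
  have hA : t ≤ c t * t := Nat.le_mul_of_pos_left t hc1
  have h3 : (c t - 1) * t = c t * t - t := by rw [Nat.sub_one_mul]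
  refine ⟨t, ht, by omega, fun s => if s = t then c t - 1 else c s, ?_⟩
  simp only []
  omega

lemma main_iff (S : Finset ℕ) (hS : ∀ s ∈ S, 2 ≤ s) (n : ℕ) :
    ¬ LeftFirstWins {1} (S.image (· - 1)) n ↔ RepSum S n := by
  induction n using Nat.strong_induction_on with
  | _ n ih =>
    rw [LeftFirstWins]
    match n with
    | 0 =>
      simp only [Finset.mem_singleton]
      constructor
      · intro _; exact repsum_zero S
      · rintro - ⟨s, rfl, -, hle, -⟩; omega
    | Nat.succ m =>
      have lhs_iff : (¬ ∃ s ∈ ({1} : Finset ℕ), ∃ (_ : 0 < s) (_ : s ≤ m + 1),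
          ¬ RightFirstWins {1} (S.image (· - 1)) (m + 1 - s)) ↔
          RightFirstWins {1} (S.image (· - 1)) m := by
        constructor
        · intro h
          by_contra hR
          exact h ⟨1, Finset.mem_singleton_self 1, Nat.one_pos, by omega, by simpa using hR⟩
        · rintro hR ⟨s, hs, -, -, hns⟩
          rw [Finset.mem_singleton] at hs
          subst hs
          exact hns (by simpa using hR)
      rw [lhs_iff, RightFirstWins]
      constructor
      · rintro ⟨s, hs, hpos, hle, hnl⟩
        rw [Finset.mem_image] at hs
        obtain ⟨t, htS, rfl⟩ := hs
        have ht2 := hS t htS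
        have hrep : RepSum S (m - (t - 1)) := (ih (m - (t - 1)) (by omega)).mp hnl
        show RepSum S (m + 1)
        have : m + 1 = (m - (t - 1)) + t := by omega
        rw [this]
        exact repsum_add S htS hrep
      · intro hrep
        obtain ⟨t, htS, htle, hrep'⟩ := repsum_sub S (by omega) hrep
        have ht2 := hS t htS
        refine ⟨t - 1, Finset.mem_image_of_mem _ htS, by omega, by omega, ?_⟩
        have : m - (t - 1) = m + 1 - t := by omega
        rw [this]
        exact (ih (m + 1 - t) (by omega)).mpr hrep'

theorem stmt_7 (S : Finset ℕ) (hS : ∀ s ∈ S, 2 ≤ s) (n : ℕ) (hn : 1 ≤ n) :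
    ¬ LeftFirstWins {1} (S.image (· - 1)) n ↔
      ∃ c : ℕ → ℕ, n = ∑ s ∈ S, c s * s := main_iff S hS n
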